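/- There exists a unique q ∈ ℝ with B(−104/75, q) = 0, while there is no s ∈ ℝ with s² − 1 = −104/75; hence the real zero set of B contains exactly one point with first coordinate −104/75, and that point does not lie on the curve parametrized by s ↦ (s² − 1, −75s⁵ + (345/4)s⁴ − 29s³ + (117/2)s² − 163/4). -/

import Mathlib

/-!
At `p = -104/75` the factor `75p + 104` vanishes, so `B(-104/75, ·)` is a perfect square in `q`
with the single (double) root `q = -18928/375`. On the other hand every point of the curve has
first coordinate `s² - 1 ≥ -1 > -104/75`.
-/

/-- `B(p,q) = (q − (345/4)p² − 231p − 104)² − (p + 1)³(75p + 104)²`. -/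
noncomputable def B (p q : ℝ) : ℝ :=
  (q - (345 / 4) * p ^ 2 - 231 * p - 104) ^ 2 - (p + 1) ^ 3 * (75 * p + 104) ^ 2

/-- The polynomial parametrization of the asymptotic variety of the Pinchuk map
of degree 25. -/
noncomputable def pinchukCurve (s : ℝ) : ℝ × ℝ :=
  (s ^ 2 - 1, -75 * s ^ 5 + (345 / 4) * s ^ 4 - 29 * s ^ 3 + (117 / 2) * s ^ 2 - 163 / 4)

lemma B_neg_104_div_75 (q : ℝ) : B (-104 / 75) q = (q + 18928 / 375) ^ 2 := by
  unfold B
  ring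

lemma existsUnique_B_neg_104_div_75_eq_zero : ∃! q : ℝ, B (-104 / 75) q = 0 := by
  refine ⟨-18928 / 375, by simp only [B_neg_104_div_75]; norm_num, fun q hq => ?_⟩
  simp only [B_neg_104_div_75, sq_eq_zero_iff] at hq
  linarith

lemma sq_sub_one_ne_of_lt {a : ℝ} (ha : a < -1) (s : ℝ) : s ^ 2 - 1 ≠ a := by
  nlinarith [sq_nonneg s]

lemma mk_notMem_range_pinchukCurve {a : ℝ} (ha : a < -1) (q : ℝ) :
    (a, q) ∉ Set.range pinchukCurve := by
  rintro ⟨s, hs⟩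
  exact sq_sub_one_ne_of_lt ha s (congrArg Prod.fst hs)

theorem zariski_extra_point :
    (∃! q : ℝ, B (-104 / 75) q = 0) ∧
    (¬ ∃ s : ℝ, s ^ 2 - 1 = -104 / 75) ∧
    (∀ q : ℝ, B (-104 / 75) q = 0 → (-104 / 75, q) ∉ Set.range pinchukCurve) := by
  have h : (-104 / 75 : ℝ) < -1 := by norm_num
  exact ⟨existsUnique_B_neg_104_div_75_eq_zero,
    fun ⟨s, hs⟩ => sq_sub_one_ne_of_lt h s hs,
    fun q _ => mk_notMem_range_pinchukCurve h q⟩
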